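/- Let β > 0 and let Φ ∈ ℝ satisfy the Hamiltonian constraint at time zero with φ(0) = 0, namely 3β^2 − 3·Φ·β^3 = Φ^2/2. Then the denominator of the reduced Hubble evolution equation is positive, 2 − 2βΦ + 3β^4 > 0, and the initial value of D₁ = H' + 5H^2 computed from the reduced equation is positive: (−4β^3·Φ − Φ^2 + β^2·Φ^2 − 3β^6)/(2 − 2βΦ + 3β^4) + 5β^2 > 0. -/

import Mathlib

/-!
Write `u = βΦ`. The constraint reads `Φ²/2 = 3β²(1 - u)`, so `u < 1` (equality would force
`Φ = 0`, hence `u = 0`). The denominator is then `2(1 - u) + 3β⁴ > 0`. Multiplying the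
numerator of `D₁` by `1 - u` and eliminating `Φ²` and `β⁴(1 - u)` via the constraint leaves
`β²(10u² - 12u + 4 + Φ²(1 - u))`, and `10u² - 12u + 4` has negative discriminant.
-/

section HamiltonianConstraint

variable {β Φ : ℝ}

lemma mul_lt_one_of_hamiltonian_constraint (hβ : β ≠ 0)
    (hc : 3 * β ^ 2 - 3 * Φ * β ^ 3 = Φ ^ 2 / 2) : β * Φ < 1 := by
  have hβ2 : 0 < β ^ 2 := by positivity
  have hsq : 3 * β ^ 2 * (1 - β * Φ) = Φ ^ 2 / 2 := by linear_combination hc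
  rcases (show β * Φ ≤ 1 by nlinarith [sq_nonneg Φ]).lt_or_eq with hlt | heq
  · exact hlt
  · have hΦ : Φ = 0 := by simpa [heq] using hsq.symm
    simp [hΦ] at heq

lemma reduced_denominator_pos (hβ : β ≠ 0)
    (hc : 3 * β ^ 2 - 3 * Φ * β ^ 3 = Φ ^ 2 / 2) : 0 < 2 - 2 * β * Φ + 3 * β ^ 4 := by
  have hu := mul_lt_one_of_hamiltonian_constraint hβ hc
  have hβ4 : 0 < β ^ 4 := by positivity
  linarith

lemma reduced_numerator_add_pos (hβ : β ≠ 0)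
    (hc : 3 * β ^ 2 - 3 * Φ * β ^ 3 = Φ ^ 2 / 2) :
    0 < (-4 * β ^ 3 * Φ - Φ ^ 2 + β ^ 2 * Φ ^ 2 - 3 * β ^ 6)
      + 5 * β ^ 2 * (2 - 2 * β * Φ + 3 * β ^ 4) := by
  have hu : 0 < 1 - β * Φ := sub_pos.mpr (mul_lt_one_of_hamiltonian_constraint hβ hc)
  have hquad : 0 < 10 * (β * Φ - 3 / 5) ^ 2 + 2 / 5 + Φ ^ 2 * (1 - β * Φ) := by positivity
  have hreduced : (1 - β * Φ) * ((-4 * β ^ 3 * Φ - Φ ^ 2 + β ^ 2 * Φ ^ 2 - 3 * β ^ 6)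
      + 5 * β ^ 2 * (2 - 2 * β * Φ + 3 * β ^ 4))
      = β ^ 2 * (10 * (β * Φ - 3 / 5) ^ 2 + 2 / 5 + Φ ^ 2 * (1 - β * Φ)) := by
    linear_combination (2 * (1 - β * Φ) + 4 * β ^ 4) * hc
  refine pos_of_mul_pos_right (a := 1 - β * Φ) ?_ hu.le
  rw [hreduced]
  positivity

end HamiltonianConstraint

theorem stmt_6 (β Φ : ℝ) (hβ : 0 < β)
    (hc : 3 * β ^ 2 - 3 * Φ * β ^ 3 = Φ ^ 2 / 2) :
    2 - 2 * β * Φ + 3 * β ^ 4 > 0 ∧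
    (-4 * β ^ 3 * Φ - Φ ^ 2 + β ^ 2 * Φ ^ 2 - 3 * β ^ 6) /
        (2 - 2 * β * Φ + 3 * β ^ 4) + 5 * β ^ 2 > 0 := by
  have hD := reduced_denominator_pos hβ.ne' hc
  refine ⟨hD, ?_⟩
  rw [div_add' _ _ _ hD.ne']
  exact div_pos (reduced_numerator_add_pos hβ.ne' hc) hD
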